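/- arXiv:0912.4570 — 3 statements merged into one kernel-verified Lean document; each statement's English description precedes it below -/
import Mathlib

section
/- (Monotonicity in MSA) With the MSA iteration as above, the sums s_k := Σ_{i=1}^K F(x_{(k)}^i) are non-increasing in k, and hence Σ_{n=0}^{k−1} Σ_{i=1}^K F(x_{(n+1)}^i) ≥ k Σ_{i=1}^K F(x_{(k)}^i). -/
open RealInnerProductSpace Finset

lemma descent_lemma {n : ℕ} (f : EuclideanSpace ℝ (Fin n) → ℝ)
    (g : EuclideanSpace ℝ (Fin n) → EuclideanSpace ℝ (Fin n)) (L : ℝ)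
    (hgrad : ∀ y, HasGradientAt f (g y) y)
    (hlip : ∀ y z, ‖g y - g z‖ ≤ L * ‖y - z‖)
    (x y : EuclideanSpace ℝ (Fin n)) :
    f y ≤ f x + ⟪g x, y - x⟫ + L / 2 * ‖y - x‖ ^ 2 := by
  set v := y - x with hv
  have hg_cont : Continuous g := by
    have : LipschitzWith (Real.toNNReal (max L 0)) g := by
      apply LipschitzWith.of_dist_le_mul
      intro a b
      rw [dist_eq_norm, dist_eq_norm, Real.coe_toNNReal _ (le_max_right L 0)]
      exact le_trans (hlip a b)
        (mul_le_mul_of_nonneg_right (le_max_left L 0) (norm_nonneg _))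
    exact this.continuous
  have hderiv : ∀ t : ℝ, HasDerivAt (fun t : ℝ => f (x + t • v)) ⟪g (x + t • v), v⟫ t := by
    intro t
    have h1 : HasDerivAt (fun t : ℝ => x + t • v) v t := by
      simpa using ((hasDerivAt_id t).smul_const v).const_add x
    have h2 := (hgrad (x + t • v)).hasFDerivAt.comp_hasDerivAt t h1
    simpa [Function.comp_def] using h2
  have hcont : Continuous fun t : ℝ => (⟪g (x + t • v), v⟫ : ℝ) := by
    exact (hg_cont.comp (by continuity)).inner continuous_const
  have key : f y - f x = ∫ t in (0:ℝ)..1, ⟪g (x + t • v), v⟫ := by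
    have := intervalIntegral.integral_eq_sub_of_hasDerivAt
      (fun t _ => hderiv t) (hcont.intervalIntegrable 0 1)
    rw [this]
    norm_num [hv]
  have hb : (∫ t in (0:ℝ)..1, ⟪g (x + t • v), v⟫)
      ≤ ∫ t in (0:ℝ)..1, (⟪g x, v⟫ + t * (L * ‖v‖ ^ 2)) := by
    apply intervalIntegral.integral_mono_on (by norm_num)
      (hcont.intervalIntegrable 0 1)
      (Continuous.intervalIntegrable (by continuity) 0 1)
    intro t ht
    have ht0 : 0 ≤ t := ht.1
    have h1 : (⟪g (x + t • v), v⟫ : ℝ) = ⟪g x, v⟫ + ⟪g (x + t • v) - g x, v⟫ := by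
      rw [inner_sub_left]; ring
    have h2 : (⟪g (x + t • v) - g x, v⟫ : ℝ) ≤ ‖g (x + t • v) - g x‖ * ‖v‖ :=
      real_inner_le_norm _ _
    have h3 : ‖g (x + t • v) - g x‖ ≤ L * (t * ‖v‖) := by
      have := hlip (x + t • v) x
      simpa [norm_smul, abs_of_nonneg ht0, mul_assoc] using this
    have h4 : ‖g (x + t • v) - g x‖ * ‖v‖ ≤ L * (t * ‖v‖) * ‖v‖ :=
      mul_le_mul_of_nonneg_right h3 (norm_nonneg _)
    have : (⟪g (x + t • v), v⟫ : ℝ) ≤ ⟪g x, v⟫ + L * (t * ‖v‖) * ‖v‖ := by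
      rw [h1]; linarith
    calc (⟪g (x + t • v), v⟫ : ℝ) ≤ ⟪g x, v⟫ + L * (t * ‖v‖) * ‖v‖ := this
      _ = ⟪g x, v⟫ + t * (L * ‖v‖ ^ 2) := by ring
  have hval : (∫ t in (0:ℝ)..1, (⟪g x, v⟫ + t * (L * ‖v‖ ^ 2)))
      = ⟪g x, v⟫ + L / 2 * ‖v‖ ^ 2 := by
    rw [intervalIntegral.integral_add intervalIntegrable_const
      ((intervalIntegral.intervalIntegrable_id).mul_const _)]
    rw [intervalIntegral.integral_const, intervalIntegral.integral_mul_const, integral_id]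
    norm_num; ring
  rw [hval] at hb
  linarith [key ▸ hb]

open RealInnerProductSpace Finset

theorem MSA_monotonicity (n K : ℕ) (hK : 0 < K)
    (f : Fin K → EuclideanSpace ℝ (Fin n) → ℝ)
    (g : Fin K → EuclideanSpace ℝ (Fin n) → EuclideanSpace ℝ (Fin n))
    (L : Fin K → ℝ) (μ : ℝ)
    (x : ℕ → Fin K → EuclideanSpace ℝ (Fin n))
    (w : ℕ → Fin K → EuclideanSpace ℝ (Fin n))
    (D : ℕ → Fin K → Fin K → ℝ)
    (x0 : EuclideanSpace ℝ (Fin n))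
    (hconv : ∀ j, ConvexOn ℝ Set.univ (f j))
    (hgrad : ∀ j y, HasGradientAt (f j) (g j y) y)
    (hlip : ∀ j y z, ‖g j y - g j z‖ ≤ L j * ‖y - z‖)
    (hμ0 : 0 < μ)
    (hμ : μ ≤ 1 / (Finset.univ.sup' (Finset.univ_nonempty_iff.mpr ⟨⟨0, hK⟩⟩) L))
    (hx0 : ∀ i, x 0 i = x0)
    (hw0 : ∀ i, w 0 i = x0)
    (hDnn : ∀ k i j, 0 ≤ D k i j)
    (hDrow : ∀ k i, ∑ j, D k i j = 1)
    (hDcol : ∀ k j, ∑ i, D k i j = 1)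
    (hx : ∀ k i u, f i (x (k + 1) i) + ∑ j ∈ Finset.univ.erase i,
          (f j (w k i) + ⟪g j (w k i), x (k + 1) i - w k i⟫ +
            (1 / (2 * μ)) * ‖x (k + 1) i - w k i‖ ^ 2)
        ≤ f i u + ∑ j ∈ Finset.univ.erase i,
          (f j (w k i) + ⟪g j (w k i), u - w k i⟫ + (1 / (2 * μ)) * ‖u - w k i‖ ^ 2))
    (hwupd : ∀ k i, w (k + 1) i = ∑ j, D (k + 1) j i • x (k + 1) j) :
    (∀ k, ∑ i, (∑ j, f j (x (k + 1) i)) ≤ ∑ i, (∑ j, f j (x k i))) ∧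
      ∀ k, ∑ m ∈ Finset.range k, ∑ i, (∑ j, f j (x (m + 1) i))
        ≥ (k : ℝ) * ∑ i, (∑ j, f j (x k i)) := by
  set M := Finset.univ.sup' (Finset.univ_nonempty_iff.mpr ⟨⟨0, hK⟩⟩) L with hM
  -- each L j ≤ 1/μ
  have hM0 : 0 < M := by
    by_contra h
    push_neg at h
    have : (1 : ℝ) / M ≤ 0 := one_div_nonpos.mpr h
    linarith
  have hLμ : ∀ j, L j ≤ 1 / μ := by
    intro j
    have h1 : L j ≤ M := Finset.le_sup' L (Finset.mem_univ j)
    have h2 : M ≤ 1 / μ := by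
      rw [le_div_iff₀ hμ0]
      have := (le_div_iff₀ hM0).mp hμ
      linarith [mul_comm M μ]
    linarith
  set F : EuclideanSpace ℝ (Fin n) → ℝ := fun u => ∑ j, f j u with hF
  -- Step A : F (x (k+1) i) ≤ F (w k i)
  have stepA : ∀ k i, F (x (k + 1) i) ≤ F (w k i) := by
    intro k i
    have h := hx k i (w k i)
    simp only [sub_self, inner_zero_right, norm_zero] at h
    have hRHS : f i (w k i) + ∑ j ∈ Finset.univ.erase i,
        (f j (w k i) + 0 + 1 / (2 * μ) * 0 ^ 2) = F (w k i) := by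
      simp only [hF]
      rw [← Finset.add_sum_erase _ _ (Finset.mem_univ i)]
      ring_nf
    have hterm : ∀ j ∈ Finset.univ.erase i,
        f j (x (k + 1) i) ≤ f j (w k i) + ⟪g j (w k i), x (k + 1) i - w k i⟫ +
          (1 / (2 * μ)) * ‖x (k + 1) i - w k i‖ ^ 2 := by
      intro j _
      have hd := descent_lemma (f j) (g j) (L j) (hgrad j) (hlip j) (w k i) (x (k + 1) i)
      have hcoef : L j / 2 * ‖x (k + 1) i - w k i‖ ^ 2
          ≤ 1 / (2 * μ) * ‖x (k + 1) i - w k i‖ ^ 2 := by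
        apply mul_le_mul_of_nonneg_right _ (by positivity)
        rw [div_le_div_iff₀ (by norm_num) (by positivity)]
        have := hLμ j
        rw [le_div_iff₀ hμ0] at this
        linarith
      linarith
    have hLHS : F (x (k + 1) i) ≤ f i (x (k + 1) i) + ∑ j ∈ Finset.univ.erase i,
        (f j (w k i) + ⟪g j (w k i), x (k + 1) i - w k i⟫ +
          (1 / (2 * μ)) * ‖x (k + 1) i - w k i‖ ^ 2) := by
      simp only [hF]
      rw [← Finset.add_sum_erase _ (fun j => f j (x (k+1) i)) (Finset.mem_univ i)]
      exact add_le_add_right (Finset.sum_le_sum hterm) _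
    calc F (x (k + 1) i) ≤ _ := hLHS
      _ ≤ _ := h
      _ = F (w k i) := hRHS
  -- Step B : ∑ i, F (w k i) ≤ ∑ i, F (x k i)
  have stepB : ∀ k, ∑ i, F (w k i) ≤ ∑ i, F (x k i) := by
    intro k
    match k with
    | 0 => simp [hw0, hx0]
    | m + 1 =>
      have h1 : ∀ i, F (w (m + 1) i) ≤ ∑ p, D (m + 1) p i * F (x (m + 1) p) := by
        intro i
        have h2 : ∀ j, f j (w (m + 1) i) ≤ ∑ p, D (m + 1) p i * f j (x (m + 1) p) := by
          intro j
          rw [hwupd m i]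
          exact (hconv j).map_sum_le (fun p _ => hDnn (m+1) p i) (hDcol (m+1) i)
            (fun p _ => Set.mem_univ _)
        calc F (w (m + 1) i) ≤ ∑ j, ∑ p, D (m + 1) p i * f j (x (m + 1) p) :=
              Finset.sum_le_sum (fun j _ => h2 j)
          _ = ∑ p, D (m + 1) p i * F (x (m + 1) p) := by
              rw [Finset.sum_comm]
              simp [hF, Finset.mul_sum]
      calc ∑ i, F (w (m + 1) i) ≤ ∑ i, ∑ p, D (m + 1) p i * F (x (m + 1) p) :=
            Finset.sum_le_sum (fun i _ => h1 i)
        _ = ∑ p, (∑ i, D (m + 1) p i) * F (x (m + 1) p) := by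
            rw [Finset.sum_comm]
            simp [Finset.sum_mul]
        _ = ∑ p, F (x (m + 1) p) := by
            simp [hDrow]
  have mono : ∀ k, ∑ i, F (x (k + 1) i) ≤ ∑ i, F (x k i) := by
    intro k
    calc ∑ i, F (x (k + 1) i) ≤ ∑ i, F (w k i) := Finset.sum_le_sum (fun i _ => stepA k i)
      _ ≤ ∑ i, F (x k i) := stepB k
  refine ⟨mono, ?_⟩
  have anti : ∀ a b, a ≤ b → ∑ i, F (x b i) ≤ ∑ i, F (x a i) := by
    intro a b hab
    induction b with
    | zero => simp_all
    | succ c ih =>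
      rcases Nat.lt_or_ge a (c + 1) with h | h
      · exact le_trans (mono c) (ih (Nat.lt_succ_iff.mp h))
      · have : a = c + 1 := le_antisymm hab h
        simp [this]
  intro k
  calc ∑ m ∈ Finset.range k, ∑ i, F (x (m + 1) i)
      ≥ ∑ _m ∈ Finset.range k, ∑ i, F (x k i) := by
        apply Finset.sum_le_sum
        intro m hm
        exact anti (m + 1) k (Finset.mem_range.mp hm)
    _ = (k : ℝ) * ∑ i, F (x k i) := by
        rw [Finset.sum_const, Finset.card_range, nsmul_eq_mul]
end

section
/- (Key recursion for FaMSA) In the fast multiple splitting algorithm, with v_k := Σ_{i=1}^K F(x_{(k)}^i) − K F(x*) and u_k^i := t_k x_{(k)}^i − (t_k − 1) ŵ_{(k−1)}^i − x*, the iterates satisfy 2μ(t_k² v_k − t_{k+1}² v_{k+1}) ≥ (K−1) Σ_{i=1}^K (‖u_{k+1}^i‖² − ‖u_k^i‖²). -/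
open RealInnerProductSpace Finset

variable {E : Type*} [NormedAddCommGroup E] [InnerProductSpace ℝ E] [CompleteSpace E]

lemma line_hasDerivAt (f : E → ℝ) {gp : E} (x d : E) (s : ℝ)
    (hg : HasGradientAt f gp (x + s • d)) :
    HasDerivAt (fun r : ℝ => f (x + r • d)) ⟪gp, d⟫ s := by
  have hline : HasDerivAt (fun r : ℝ => x + r • d) d s :=
    ((hasDerivAt_id s).smul_const d).const_add x |>.congr_deriv (one_smul ℝ d)
  have := hg.hasFDerivAt.comp_hasDerivAt s hline
  simpa [InnerProductSpace.toDual_apply_apply, Function.comp_def] using this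

lemma subgrad (f : E → ℝ) (hc : ConvexOn ℝ Set.univ f) {gx : E} (x : E)
    (hg : HasGradientAt f gx x) (u : E) : f x + ⟪gx, u - x⟫ ≤ f u := by
  have hd : HasDerivAt (fun r : ℝ => f (x + r • (u - x))) ⟪gx, u - x⟫ 0 := by
    have := line_hasDerivAt f x (u - x) 0 (by simpa using hg)
    simpa using this
  have hslope : Filter.Tendsto (fun s : ℝ => s⁻¹ * (f (x + s • (u - x)) - f x))
      (nhdsWithin 0 (Set.Ioi 0)) (nhds ⟪gx, u - x⟫) := by
    simpa using hd.tendsto_slope_zero_right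
  have hev : ∀ᶠ s in nhdsWithin (0:ℝ) (Set.Ioi 0),
      s⁻¹ * (f (x + s • (u - x)) - f x) ≤ f u - f x := by
    filter_upwards [Ioc_mem_nhdsGT_of_mem (by constructor <;> norm_num :
      (0:ℝ) ∈ Set.Ico 0 1)] with s hs
    obtain ⟨hs0, hs1⟩ := hs
    have hcomb : x + s • (u - x) = (1 - s) • x + s • u := by module
    have := hc.2 (Set.mem_univ x) (Set.mem_univ u) (by linarith : (0:ℝ) ≤ 1 - s)
      (le_of_lt hs0) (by ring)
    rw [hcomb]
    rw [smul_eq_mul, smul_eq_mul] at this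
    rw [inv_mul_le_iff₀ hs0]
    nlinarith
  have := le_of_tendsto hslope hev
  linarith

lemma descent (f : E → ℝ) (g : E → E) (hg : ∀ y, HasGradientAt f (g y) y) {C : ℝ}
    (hC : 0 ≤ C) (hl : ∀ y z, ‖g y - g z‖ ≤ C * ‖y - z‖) (x y : E) :
    f y ≤ f x + ⟪g x, y - x⟫ + C / 2 * ‖y - x‖ ^ 2 := by
  set d := y - x with hd
  set ψ : ℝ → ℝ := fun s => f (x + s • d) - s * ⟪g x, d⟫ - C / 2 * ‖d‖ ^ 2 * s ^ 2 with hψ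
  have hder : ∀ s : ℝ, HasDerivAt ψ
      (⟪g (x + s • d), d⟫ - ⟪g x, d⟫ - C * ‖d‖ ^ 2 * s) s := by
    intro s
    have h1 : HasDerivAt (fun r : ℝ => f (x + r • d)) ⟪g (x + s • d), d⟫ s :=
      line_hasDerivAt f x d s (hg _)
    have h2 : HasDerivAt (fun r : ℝ => r * ⟪g x, d⟫) ⟪g x, d⟫ s := by
      simpa using (hasDerivAt_id s).mul_const ⟪g x, d⟫
    have h3 : HasDerivAt (fun r : ℝ => C / 2 * ‖d‖ ^ 2 * r ^ 2)
        (C / 2 * ‖d‖ ^ 2 * (2 * s)) s := by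
      simpa using (hasDerivAt_pow 2 s).const_mul (C / 2 * ‖d‖ ^ 2)
    have := (h1.sub h2).sub h3
    exact this.congr_deriv (by ring)
  have hmono : AntitoneOn ψ (Set.Icc 0 1) := by
    apply antitoneOn_of_deriv_nonpos (convex_Icc 0 1)
    · exact fun s _ => ((hder s).differentiableAt).continuousAt.continuousWithinAt
    · exact fun s _ => ((hder s).differentiableAt).differentiableWithinAt
    · intro s hs
      rw [interior_Icc] at hs
      rw [(hder s).deriv]
      have hb : ⟪g (x + s • d) - g x, d⟫ ≤ C * s * ‖d‖ ^ 2 := by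
        calc ⟪g (x + s • d) - g x, d⟫ ≤ ‖g (x + s • d) - g x‖ * ‖d‖ :=
              real_inner_le_norm _ _
          _ ≤ (C * ‖x + s • d - x‖) * ‖d‖ := by
              apply mul_le_mul_of_nonneg_right (hl _ _) (norm_nonneg _)
          _ = C * s * ‖d‖ ^ 2 := by
              rw [show x + s • d - x = s • d by abel, norm_smul, Real.norm_eq_abs,
                abs_of_pos hs.1]
              ring
      rw [inner_sub_left] at hb
      linarith
  have h01 := hmono (Set.left_mem_Icc.mpr zero_le_one) (Set.right_mem_Icc.mpr zero_le_one)
    zero_le_one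
  have e0 : ψ 0 = f x := by simp [hψ]
  have e1 : ψ 1 = f y - ⟪g x, d⟫ - C / 2 * ‖d‖ ^ 2 := by
    simp only [hψ, one_smul, one_mul, one_pow, mul_one]
    rw [hd, show x + (y - x) = y by abel]
  rw [e0, e1] at h01
  linarith

lemma quad_id (s : ℝ) (a b c : E) :
    ‖(1 - s) • a + s • b - c‖ ^ 2 =
      (1 - s) * ‖a - c‖ ^ 2 + s * ‖b - c‖ ^ 2 - s * (1 - s) * ‖a - b‖ ^ 2 := by
  have h1 : (1 - s) • a + s • b - c = (1 - s) • (a - c) + s • (b - c) := by module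
  have h2 : a - b = (a - c) - (b - c) := by abel
  rw [h1, h2, norm_add_sq_real, norm_sub_sq_real (a - c) (b - c), norm_smul, norm_smul,
    real_inner_smul_left, real_inner_smul_right, mul_pow, mul_pow, Real.norm_eq_abs,
    Real.norm_eq_abs, sq_abs, sq_abs]
  ring

lemma comb_id (t : ℝ) (p q z : E) :
    ‖t • p - (t - 1) • q - z‖ ^ 2 =
      t * (t - 1) * ‖p - q‖ ^ 2 + t * ‖p - z‖ ^ 2 - (t - 1) * ‖q - z‖ ^ 2 := by
  have h1 : t • p - (t - 1) • q - z = (t - 1) • (p - q) + (p - z) := by module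
  have h2 : q - z = (p - z) - (p - q) := by abel
  rw [h1, h2, norm_add_sq_real, norm_sub_sq_real (p - z) (p - q), norm_smul,
    real_inner_smul_left, mul_pow, Real.norm_eq_abs, sq_abs, real_inner_comm (p - z) (p - q)]
  ring

lemma prox_ineq {K : ℕ} (hK : 0 < K)
    (f : Fin K → E → ℝ) (g : Fin K → E → E) (μ : ℝ) (hμ0 : 0 < μ)
    (hconv : ∀ j, ConvexOn ℝ Set.univ (f j))
    (hgrad : ∀ j y, HasGradientAt (f j) (g j y) y)
    (hlipμ : ∀ j y z, ‖g j y - g j z‖ ≤ (1/μ) * ‖y - z‖)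
    (i : Fin K) (X W : E)
    (hmin : ∀ u, f i X + ∑ j ∈ Finset.univ.erase i,
        (f j W + ⟪g j W, X - W⟫ + (1/(2*μ)) * ‖X - W‖^2)
      ≤ f i u + ∑ j ∈ Finset.univ.erase i,
        (f j W + ⟪g j W, u - W⟫ + (1/(2*μ)) * ‖u - W‖^2)) :
    ∀ u, ((K:ℝ) - 1) * (‖X - u‖^2 - ‖W - u‖^2)
      ≤ 2*μ*((∑ j, f j u) - ∑ j, f j X) := by
  intro u
  set Q : E → ℝ := fun y => f i y + ∑ j ∈ Finset.univ.erase i,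
      (f j W + ⟪g j W, y - W⟫ + (1/(2*μ)) * ‖y - W‖^2) with hQ
  have hcard : ((Finset.univ.erase i).card : ℝ) = (K:ℝ) - 1 := by
    rw [Finset.card_erase_of_mem (Finset.mem_univ i)]
    simp [Nat.cast_sub hK]
  set c : ℝ := ((K:ℝ) - 1)/(2*μ) with hc
  have hK1 : (1:ℝ) ≤ (K:ℝ) := by exact_mod_cast hK
  have hc0 : 0 ≤ c := by
    apply div_nonneg (by linarith) (by linarith)
  -- strong minimality
  have hstrong : Q X + c * ‖X - u‖^2 ≤ Q u := by
    set En : ℝ := ‖X - u‖^2 with hEn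
    have hEn0 : 0 ≤ En := sq_nonneg _
    have hs : ∀ s ∈ Set.Ioo (0:ℝ) 1, c * (1 - s) * En ≤ Q u - Q X := by
      intro s hs
      obtain ⟨hs0, hs1⟩ := hs
      have hcomb : Q ((1-s) • X + s • u) ≤ (1-s) * Q X + s * Q u - c * s * (1-s) * En := by
        have hf : f i ((1-s) • X + s • u) ≤ (1-s) * f i X + s * f i u := by
          have := (hconv i).2 (Set.mem_univ X) (Set.mem_univ u)
            (by linarith : (0:ℝ) ≤ 1 - s) (le_of_lt hs0) (by ring)
          simpa using this
        have hterm : ∀ j ∈ Finset.univ.erase i,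
            (f j W + ⟪g j W, ((1-s) • X + s • u) - W⟫
              + (1/(2*μ)) * ‖((1-s) • X + s • u) - W‖^2)
            = (1-s) * (f j W + ⟪g j W, X - W⟫ + (1/(2*μ)) * ‖X - W‖^2)
              + s * (f j W + ⟪g j W, u - W⟫ + (1/(2*μ)) * ‖u - W‖^2)
              - (1/(2*μ)) * s * (1-s) * En := by
          intro j _
          have hv : ((1-s) • X + s • u) - W = (1-s) • (X - W) + s • (u - W) := by module
          rw [hv, inner_add_right, real_inner_smul_right, real_inner_smul_right, ← hv,
            quad_id s X u W, hEn]
          ring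
        have hsum : (∑ j ∈ Finset.univ.erase i,
              (f j W + ⟪g j W, ((1-s) • X + s • u) - W⟫
                + (1/(2*μ)) * ‖((1-s) • X + s • u) - W‖^2))
            = (1-s) * (∑ j ∈ Finset.univ.erase i,
                (f j W + ⟪g j W, X - W⟫ + (1/(2*μ)) * ‖X - W‖^2))
              + s * (∑ j ∈ Finset.univ.erase i,
                (f j W + ⟪g j W, u - W⟫ + (1/(2*μ)) * ‖u - W‖^2))
              - ((K:ℝ) - 1) * ((1/(2*μ)) * s * (1-s) * En) := by
          calc (∑ j ∈ Finset.univ.erase i,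
              (f j W + ⟪g j W, ((1-s) • X + s • u) - W⟫
                + (1/(2*μ)) * ‖((1-s) • X + s • u) - W‖^2))
              = ∑ j ∈ Finset.univ.erase i,
                ((1-s) * (f j W + ⟪g j W, X - W⟫ + (1/(2*μ)) * ‖X - W‖^2)
                  + s * (f j W + ⟪g j W, u - W⟫ + (1/(2*μ)) * ‖u - W‖^2)
                  - (1/(2*μ)) * s * (1-s) * En) := Finset.sum_congr rfl hterm
            _ = _ := by
                rw [Finset.sum_sub_distrib, Finset.sum_add_distrib, ← Finset.mul_sum,
                  ← Finset.mul_sum, Finset.sum_const, nsmul_eq_mul, hcard]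
        have hcc : ((K:ℝ) - 1) * ((1/(2*μ)) * s * (1-s) * En) = c * s * (1-s) * En := by
          rw [hc]; ring
        simp only [hQ]
        rw [hsum]
        linarith
      have hmin' := hmin ((1-s) • X + s • u)
      have hQXle : Q X ≤ Q ((1-s) • X + s • u) := hmin'
      have h2 : s * (Q X - Q u + c * (1-s) * En) ≤ 0 := by nlinarith
      have h3 : Q X - Q u + c * (1-s) * En ≤ 0 := by
        by_contra hcon
        push_neg at hcon
        nlinarith
      linarith
    have htend : Filter.Tendsto (fun s : ℝ => c * (1 - s) * En) (nhdsWithin 0 (Set.Ioi 0))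
        (nhds (c * En)) := by
      have hcont : Continuous (fun s : ℝ => c * (1 - s) * En) :=
        (continuous_const.mul (continuous_const.sub continuous_id)).mul continuous_const
      have h0 : c * (1 - (0:ℝ)) * En = c * En := by ring
      rw [← h0]
      exact (hcont.tendsto 0).mono_left nhdsWithin_le_nhds
    have hev : ∀ᶠ s in nhdsWithin (0:ℝ) (Set.Ioi 0), c * (1 - s) * En ≤ Q u - Q X := by
      filter_upwards [Ioo_mem_nhdsGT_of_mem
        (show (0:ℝ) ∈ Set.Ico 0 1 by constructor <;> norm_num)] with s hmem
      exact hs s hmem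
    have := le_of_tendsto htend hev
    linarith
  -- Q X ≥ F X
  have hFX : ∑ j, f j X ≤ Q X := by
    have hμ2 : (1/μ)/2 = (1/(2*μ)) := by ring
    have hpt : ∀ j ∈ Finset.univ.erase i,
        f j X ≤ f j W + ⟪g j W, X - W⟫ + (1/(2*μ)) * ‖X - W‖^2 := by
      intro j _
      have := descent (f j) (g j) (hgrad j) (by positivity : (0:ℝ) ≤ 1/μ) (hlipμ j) W X
      rw [hμ2] at this
      exact this
    have hsum := Finset.sum_le_sum hpt
    have hsplit : ∑ j, f j X = f i X + ∑ j ∈ Finset.univ.erase i, f j X :=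
      (Finset.add_sum_erase _ _ (Finset.mem_univ i)).symm
    rw [hsplit, hQ]
    linarith
  -- Q u ≤ F u + (K-1)/(2μ) ‖u - W‖²
  have hFu : Q u ≤ (∑ j, f j u) + ((K:ℝ) - 1) * ((1/(2*μ)) * ‖u - W‖^2) := by
    have hpt : ∀ j ∈ Finset.univ.erase i,
        f j W + ⟪g j W, u - W⟫ + (1/(2*μ)) * ‖u - W‖^2
          ≤ f j u + (1/(2*μ)) * ‖u - W‖^2 := by
      intro j _
      have := subgrad (f j) (hconv j) W (hgrad j W) u
      linarith
    have hQu : Q u ≤ f i u + ∑ j ∈ Finset.univ.erase i,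
        (f j u + (1/(2*μ)) * ‖u - W‖^2) := by
      simp only [hQ]
      exact add_le_add_right (Finset.sum_le_sum hpt) _
    rw [Finset.sum_add_distrib, Finset.sum_const, nsmul_eq_mul, hcard] at hQu
    have hsplit : ∑ j, f j u = f i u + ∑ j ∈ Finset.univ.erase i, f j u :=
      (Finset.add_sum_erase _ _ (Finset.mem_univ i)).symm
    rw [hsplit]
    linarith
  -- combine
  have hkey : c * (‖X - u‖^2 - ‖W - u‖^2) ≤ (∑ j, f j u) - ∑ j, f j X := by
    have hrev : ‖u - W‖ = ‖W - u‖ := norm_sub_rev _ _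
    rw [hrev] at hFu
    have hcc : ((K:ℝ) - 1) * ((1/(2*μ)) * ‖W - u‖^2) = c * ‖W - u‖^2 := by rw [hc]; ring
    rw [hcc] at hFu
    linarith
  have h2μc : 2*μ*c = (K:ℝ) - 1 := by
    rw [hc]; field_simp
  calc ((K:ℝ) - 1) * (‖X - u‖^2 - ‖W - u‖^2)
      = 2*μ*(c * (‖X - u‖^2 - ‖W - u‖^2)) := by rw [← h2μc]; ring
    _ ≤ 2*μ*((∑ j, f j u) - ∑ j, f j X) := by
        apply mul_le_mul_of_nonneg_left hkey (by linarith)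


theorem FaMSA_key_recursion (n K : ℕ) (hK : 0 < K)
    (f : Fin K → EuclideanSpace ℝ (Fin n) → ℝ)
    (g : Fin K → EuclideanSpace ℝ (Fin n) → EuclideanSpace ℝ (Fin n))
    (L : Fin K → ℝ) (μ : ℝ) (t : ℕ → ℝ)
    (x w what : ℕ → Fin K → EuclideanSpace ℝ (Fin n))
    (D : ℕ → Fin K → Fin K → ℝ)
    (xstar : EuclideanSpace ℝ (Fin n))
    (hconv : ∀ j, ConvexOn ℝ Set.univ (f j))
    (hgrad : ∀ j y, HasGradientAt (f j) (g j y) y)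
    (hlip : ∀ j y z, ‖g j y - g j z‖ ≤ L j * ‖y - z‖)
    (hμ0 : 0 < μ)
    (hμ : μ ≤ 1 / (Finset.univ.sup' (Finset.univ_nonempty_iff.mpr ⟨⟨0, hK⟩⟩) L))
    (hxstar : ∀ y, (∑ j, f j xstar) ≤ ∑ j, f j y)
    (ht1 : t 1 = 1)
    (htrec : ∀ k ≥ 1, t (k + 1) = (1 + Real.sqrt (1 + 4 * t k ^ 2)) / 2)
    (hDnn : ∀ k i j, 0 ≤ D k i j)
    (hDrow : ∀ k i, ∑ j, D k i j = 1)
    (hDcol : ∀ k j, ∑ i, D k i j = 1)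
    (hx : ∀ k ≥ 1, ∀ i, ∀ u, f i (x k i) + ∑ j ∈ Finset.univ.erase i,
          (f j (w k i) + ⟪g j (w k i), x k i - w k i⟫ +
            (1 / (2 * μ)) * ‖x k i - w k i‖ ^ 2)
        ≤ f i u + ∑ j ∈ Finset.univ.erase i,
          (f j (w k i) + ⟪g j (w k i), u - w k i⟫ + (1 / (2 * μ)) * ‖u - w k i‖ ^ 2))
    (hwhat : ∀ k ≥ 1, ∀ i, what k i = ∑ j, D k j i • x k j)
    (hwupd : ∀ k ≥ 1, ∀ i, w (k + 1) i = what k i +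
        (1 / t (k + 1)) • (t k • (x k i - what (k - 1) i) - (what k i - what (k - 1) i))) :
    ∀ k ≥ 1,
      2 * μ * (t k ^ 2 * ((∑ i, (∑ j, f j (x k i))) - K * (∑ j, f j xstar))
          - t (k + 1) ^ 2 * ((∑ i, (∑ j, f j (x (k + 1) i))) - K * (∑ j, f j xstar)))
        ≥ ((K : ℝ) - 1) * ∑ i,
            (‖t (k + 1) • x (k + 1) i - (t (k + 1) - 1) • what k i - xstar‖ ^ 2
              - ‖t k • x k i - (t k - 1) • what (k - 1) i - xstar‖ ^ 2) := by
  -- Lipschitz constant 1/μ works for all gradients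
  set S := Finset.univ.sup' (Finset.univ_nonempty_iff.mpr ⟨⟨0, hK⟩⟩) L with hS
  have hSpos : 0 < S := by
    by_contra h
    push_neg at h
    have : 1 / S ≤ 0 := one_div_nonpos.mpr h
    linarith
  have hS1μ : S ≤ 1 / μ := by
    have h1 : μ * S ≤ 1 := by
      have := (le_div_iff₀ hSpos).mp hμ
      linarith
    rw [le_div_iff₀ hμ0]
    linarith [mul_comm μ S]
  have hlipμ : ∀ j y z, ‖g j y - g j z‖ ≤ (1/μ) * ‖y - z‖ := by
    intro j y z
    refine le_trans (hlip j y z) (mul_le_mul_of_nonneg_right ?_ (norm_nonneg _))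
    exact le_trans (Finset.le_sup' L (Finset.mem_univ j)) hS1μ
  intro k hk
  -- facts about t
  have h14 : (0:ℝ) ≤ 1 + 4 * t k ^ 2 := by positivity
  have hsq : Real.sqrt (1 + 4 * t k ^ 2) ^ 2 = 1 + 4 * t k ^ 2 := Real.sq_sqrt h14
  have hsge : 1 ≤ Real.sqrt (1 + 4 * t k ^ 2) := by
    calc (1:ℝ) = Real.sqrt 1 := Real.sqrt_one.symm
      _ ≤ _ := Real.sqrt_le_sqrt (by nlinarith [sq_nonneg (t k)])
  have hs1 : 1 ≤ t (k+1) := by rw [htrec k hk]; linarith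
  have hsne : t (k+1) ≠ 0 := by linarith
  have hts : t (k+1) * (t (k+1) - 1) = t k ^ 2 := by
    rw [htrec k hk]
    linear_combination hsq / 4
  -- key inequality per agent at step k+1
  have hkey : ∀ i u, ((K:ℝ) - 1) * (‖x (k+1) i - u‖^2 - ‖w (k+1) i - u‖^2)
      ≤ 2*μ*((∑ j, f j u) - ∑ j, f j (x (k+1) i)) := by
    intro i u
    exact prox_ineq hK f g μ hμ0 hconv hgrad hlipμ i (x (k+1) i) (w (k+1) i)
      (hx (k+1) (by omega) i) u
  -- the vector relation from the w-update
  have hvec : ∀ i, t (k+1) • w (k+1) i - (t (k+1) - 1) • what k i - xstar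
      = t k • x k i - (t k - 1) • what (k-1) i - xstar := by
    intro i
    rw [hwupd k hk i]
    have hinv : t (k+1) • ((1 / t (k+1)) • (t k • (x k i - what (k-1) i)
        - (what k i - what (k-1) i)))
        = t k • (x k i - what (k-1) i) - (what k i - what (k-1) i) := by
      rw [smul_smul, mul_one_div, div_self hsne, one_smul]
    rw [smul_add, hinv]
    module
  -- per-agent combined inequality
  have per_i : ∀ i,
      ((K:ℝ) - 1) * (‖t (k+1) • x (k+1) i - (t (k+1) - 1) • what k i - xstar‖^2
          - ‖t k • x k i - (t k - 1) • what (k-1) i - xstar‖^2)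
      ≤ 2*μ*(t k ^2 * ((∑ j, f j (what k i)) - ∑ j, f j xstar)
          - t (k+1) ^2 * ((∑ j, f j (x (k+1) i)) - ∑ j, f j xstar)) := by
    intro i
    have I1 := hkey i (what k i)
    have I2 := hkey i xstar
    have e1 := comb_id (t (k+1)) (x (k+1) i) (what k i) xstar
    have e2 := comb_id (t (k+1)) (w (k+1) i) (what k i) xstar
    rw [← hvec i, e1, e2]
    have m1 := mul_le_mul_of_nonneg_left I1
      (mul_nonneg (by linarith) (by linarith) : (0:ℝ) ≤ t (k+1) * (t (k+1) - 1))
    have m2 := mul_le_mul_of_nonneg_left I2 (by linarith : (0:ℝ) ≤ t (k+1))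
    rw [← hts]
    linarith [m1, m2]
  -- Jensen step
  have hA : ∀ i, (∑ j, f j (what k i)) ≤ ∑ l, D k l i * (∑ j, f j (x k l)) := by
    intro i
    have hjen : ∀ j, f j (what k i) ≤ ∑ l, D k l i * f j (x k l) := by
      intro j
      rw [hwhat k hk i]
      have := (hconv j).map_sum_le (t := Finset.univ) (w := fun l => D k l i)
        (p := fun l => x k l) (fun l _ => hDnn k l i) (hDcol k i)
        (fun l _ => Set.mem_univ _)
      simpa [smul_eq_mul] using this
    calc (∑ j, f j (what k i)) ≤ ∑ j, ∑ l, D k l i * f j (x k l) :=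
          Finset.sum_le_sum (fun j _ => hjen j)
      _ = ∑ l, D k l i * (∑ j, f j (x k l)) := by
          rw [Finset.sum_comm]
          simp [Finset.mul_sum]
  have hJ : (∑ i, ∑ j, f j (what k i)) ≤ ∑ i, ∑ j, f j (x k i) := by
    calc (∑ i, ∑ j, f j (what k i)) ≤ ∑ i, ∑ l, D k l i * (∑ j, f j (x k l)) :=
          Finset.sum_le_sum (fun i _ => hA i)
      _ = ∑ l, (∑ i, D k l i) * (∑ j, f j (x k l)) := by
          rw [Finset.sum_comm]
          simp [Finset.sum_mul]
      _ = ∑ i, ∑ j, f j (x k i) := by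
          simp only [hDrow k, one_mul]
  -- sum everything up
  rw [ge_iff_le, Finset.mul_sum]
  have hsum := Finset.sum_le_sum (s := Finset.univ) (fun i _ => per_i i)
  have hRHS : (∑ i, 2*μ*(t k ^2 * ((∑ j, f j (what k i)) - ∑ j, f j xstar)
        - t (k+1) ^2 * ((∑ j, f j (x (k+1) i)) - ∑ j, f j xstar)))
      = 2*μ*(t k ^2 * ((∑ i, ∑ j, f j (what k i)) - (K:ℝ) * ∑ j, f j xstar)
        - t (k+1) ^2 * ((∑ i, ∑ j, f j (x (k+1) i)) - (K:ℝ) * ∑ j, f j xstar)) := by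
    calc (∑ i, 2*μ*(t k ^2 * ((∑ j, f j (what k i)) - ∑ j, f j xstar)
          - t (k+1) ^2 * ((∑ j, f j (x (k+1) i)) - ∑ j, f j xstar)))
        = ∑ i : Fin K, ((2*μ*t k ^2) * (∑ j, f j (what k i))
            - (2*μ*t (k+1) ^2) * (∑ j, f j (x (k+1) i))
            - (2*μ*t k ^2 - 2*μ*t (k+1) ^2) * (∑ j, f j xstar)) :=
          Finset.sum_congr rfl (fun i _ => by ring)
      _ = (2*μ*t k ^2) * (∑ i, ∑ j, f j (what k i))
            - (2*μ*t (k+1) ^2) * (∑ i, ∑ j, f j (x (k+1) i))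
            - (K:ℝ) * ((2*μ*t k ^2 - 2*μ*t (k+1) ^2) * (∑ j, f j xstar)) := by
          rw [Finset.sum_sub_distrib, Finset.sum_sub_distrib, ← Finset.mul_sum,
            ← Finset.mul_sum, Finset.sum_const, Finset.card_univ, Fintype.card_fin,
            nsmul_eq_mul]
      _ = 2*μ*(t k ^2 * ((∑ i, ∑ j, f j (what k i)) - (K:ℝ) * ∑ j, f j xstar)
            - t (k+1) ^2 * ((∑ i, ∑ j, f j (x (k+1) i)) - (K:ℝ) * ∑ j, f j xstar)) := by
          ring
  rw [hRHS] at hsum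
  refine le_trans hsum ?_
  have h2μt : (0:ℝ) ≤ 2 * μ * t k ^ 2 := by positivity
  nlinarith [mul_le_mul_of_nonneg_left hJ h2μt]
end

section
/- (FaMSA-s recursion) In the variant FaMSA-s where all agents share a single averaged point, with v_k := K(F(ŵ_{(k)}) − F(x*)) and u_k := t_k ŵ_{(k)} − (t_k−1) ŵ_{(k−1)} − x*, the iterates satisfy 2μ(t_k² v_k − t_{k+1}² v_{k+1}) ≥ K(K−1)(‖u_{k+1}‖² − ‖u_k‖²). -/
open RealInnerProductSpace Finset

section helpers
set_option linter.unusedSectionVars false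

open Filter Topology Set

variable {E : Type*} [NormedAddCommGroup E] [InnerProductSpace ℝ E] [CompleteSpace E]

lemma comb_sq (a b : E) (l : ℝ) :
    ‖(1 - l) • a + l • b‖ ^ 2
      = (1 - l) * ‖a‖ ^ 2 + l * ‖b‖ ^ 2 - l * (1 - l) * ‖a - b‖ ^ 2 := by
  simp only [← real_inner_self_eq_norm_sq]
  simp only [inner_add_left, inner_add_right, inner_sub_left, inner_sub_right,
    real_inner_smul_left, real_inner_smul_right]
  rw [real_inner_comm b a]
  ring

lemma key_id (p q r xs : E) (T c : ℝ) :
    T * ((T - 1) * (‖q - (q + c • (q - r))‖ ^ 2 - ‖p - q‖ ^ 2)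
        + (‖xs - (q + c • (q - r))‖ ^ 2 - ‖p - xs‖ ^ 2))
      = ‖(T * c + 1) • q - (T * c) • r - xs‖ ^ 2 - ‖T • p - (T - 1) • q - xs‖ ^ 2 := by
  simp only [← real_inner_self_eq_norm_sq]
  simp only [inner_add_left, inner_add_right, inner_sub_left, inner_sub_right,
    real_inner_smul_left, real_inner_smul_right]
  rw [real_inner_comm q p, real_inner_comm r q, real_inner_comm xs q, real_inner_comm xs r,
    real_inner_comm xs p]
  ring

lemma hasDerivAt_line (f : E → ℝ) (G w d : E) (s : ℝ) (hg : HasGradientAt f G (w + s • d)) :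
    HasDerivAt (fun r : ℝ => f (w + r • d)) ⟪G, d⟫ s := by
  have h1 : HasDerivAt (fun r : ℝ => w + r • d) d s := by
    simpa using ((hasDerivAt_id s).smul_const d).const_add w
  have h2 := hg.hasFDerivAt.comp_hasDerivAt s h1
  exact h2

lemma grad_lower (f : E → ℝ) (hconv : ConvexOn ℝ Set.univ f) {G x : E}
    (hg : HasGradientAt f G x) (y : E) : f x + ⟪G, y - x⟫ ≤ f y := by
  have hline : HasDerivAt (fun r : ℝ => f (x + r • (y - x))) ⟪G, y - x⟫ 0 := by
    apply hasDerivAt_line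
    simpa using hg
  have htend : Tendsto (slope (fun r : ℝ => f (x + r • (y - x))) 0) (𝓝[>] 0)
      (𝓝 ⟪G, y - x⟫) :=
    (hasDerivAt_iff_tendsto_slope.1 hline).mono_left
      (nhdsWithin_mono _ (fun z hz => ne_of_gt hz))
  have hle : ∀ᶠ s in 𝓝[>] (0:ℝ),
      slope (fun r : ℝ => f (x + r • (y - x))) 0 s ≤ f y - f x := by
    filter_upwards [Ioo_mem_nhdsGT_of_mem (by norm_num : (0:ℝ) ∈ Ico (0:ℝ) 1)] with s hs
    have hmix : x + s • (y - x) = (1 - s) • x + s • y := by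
      rw [smul_sub, sub_smul, one_smul]; abel
    have hcx : f (x + s • (y - x)) ≤ (1 - s) * f x + s * f y := by
      rw [hmix]
      exact hconv.2 (mem_univ x) (mem_univ y) (by linarith [hs.2]) (le_of_lt hs.1) (by ring)
    rw [slope_def_field]
    simp only [sub_zero]
    rw [div_le_iff₀ hs.1]
    simp only [zero_smul, add_zero]
    nlinarith [hcx]
  linarith [le_of_tendsto htend hle]

lemma descent_lem (f : E → ℝ) (g : E → E) (Lc : ℝ)
    (hg : ∀ y, HasGradientAt f (g y) y)
    (hlip : ∀ y z, ‖g y - g z‖ ≤ Lc * ‖y - z‖) (xx w : E) :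
    f xx ≤ f w + ⟪g w, xx - w⟫ + Lc / 2 * ‖xx - w‖ ^ 2 := by
  set d := xx - w with hd
  set ψ : ℝ → ℝ := fun s => f (w + s • d) - s * ⟪g w, d⟫ - Lc / 2 * s ^ 2 * ‖d‖ ^ 2 with hψ
  have hder : ∀ s : ℝ,
      HasDerivAt ψ (⟪g (w + s • d), d⟫ - ⟪g w, d⟫ - Lc * s * ‖d‖ ^ 2) s := by
    intro s
    have h1 := hasDerivAt_line f (g (w + s • d)) w d s (hg _)
    have h2 : HasDerivAt (fun s : ℝ => s * ⟪g w, d⟫) ⟪g w, d⟫ s := by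
      simpa using (hasDerivAt_id s).mul_const ⟪g w, d⟫
    have h3 : HasDerivAt (fun s : ℝ => Lc / 2 * s ^ 2 * ‖d‖ ^ 2) (Lc * s * ‖d‖ ^ 2) s := by
      have h4 := ((hasDerivAt_pow 2 s).const_mul (Lc / 2)).mul_const (‖d‖ ^ 2)
      exact h4.congr_deriv (by ring)
    exact (h1.sub h2).sub h3
  have hanti : AntitoneOn ψ (Icc 0 1) := by
    apply antitoneOn_of_deriv_nonpos (convex_Icc 0 1)
    · exact fun s _ => (hder s).continuousAt.continuousWithinAt
    · exact fun s _ => (hder s).differentiableAt.differentiableWithinAt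
    · intro s hs
      rw [interior_Icc] at hs
      rw [(hder s).deriv]
      have hi1 : ⟪g (w + s • d), d⟫ - ⟪g w, d⟫ = ⟪g (w + s • d) - g w, d⟫ :=
        (inner_sub_left _ _ _).symm
      have hi2 : ⟪g (w + s • d) - g w, d⟫ ≤ ‖g (w + s • d) - g w‖ * ‖d‖ :=
        real_inner_le_norm _ _
      have hi3 : ‖g (w + s • d) - g w‖ ≤ Lc * (s * ‖d‖) := by
        have h5 := hlip (w + s • d) w
        simpa [norm_smul, abs_of_pos hs.1] using h5
      have hi4 : ‖g (w + s • d) - g w‖ * ‖d‖ ≤ Lc * (s * ‖d‖) * ‖d‖ :=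
        mul_le_mul_of_nonneg_right hi3 (norm_nonneg _)
      rw [hi1]
      nlinarith [hi2]
  have h01 : ψ 1 ≤ ψ 0 := hanti (by norm_num) (by norm_num) zero_le_one
  have hψ0 : ψ 0 = f w := by simp [hψ]
  have hψ1 : ψ 1 = f xx - ⟪g w, d⟫ - Lc / 2 * ‖d‖ ^ 2 := by
    simp [hψ, hd]
  rw [hψ0, hψ1] at h01
  linarith

end helpers

set_option maxHeartbeats 1000000 in
theorem FaMSAs_recursion (n K : ℕ) (hK : 0 < K)
    (f : Fin K → EuclideanSpace ℝ (Fin n) → ℝ)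
    (g : Fin K → EuclideanSpace ℝ (Fin n) → EuclideanSpace ℝ (Fin n))
    (L : Fin K → ℝ) (μ : ℝ) (t : ℕ → ℝ)
    (x : ℕ → Fin K → EuclideanSpace ℝ (Fin n))
    (w what : ℕ → EuclideanSpace ℝ (Fin n))
    (xstar : EuclideanSpace ℝ (Fin n))
    (hconv : ∀ j, ConvexOn ℝ Set.univ (f j))
    (hgrad : ∀ j y, HasGradientAt (f j) (g j y) y)
    (hlip : ∀ j y z, ‖g j y - g j z‖ ≤ L j * ‖y - z‖)
    (hμ0 : 0 < μ)
    (hμ : μ ≤ 1 / (Finset.univ.sup' (Finset.univ_nonempty_iff.mpr ⟨⟨0, hK⟩⟩) L))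
    (hxstar : ∀ y, (∑ j, f j xstar) ≤ ∑ j, f j y)
    (ht1 : t 1 = 1)
    (htrec : ∀ k ≥ 1, t (k + 1) = (1 + Real.sqrt (1 + 4 * t k ^ 2)) / 2)
    (hx : ∀ k ≥ 1, ∀ i, ∀ u, f i (x k i) + ∑ j ∈ Finset.univ.erase i,
          (f j (w k) + ⟪g j (w k), x k i - w k⟫ +
            (1 / (2 * μ)) * ‖x k i - w k‖ ^ 2)
        ≤ f i u + ∑ j ∈ Finset.univ.erase i,
          (f j (w k) + ⟪g j (w k), u - w k⟫ + (1 / (2 * μ)) * ‖u - w k‖ ^ 2))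
    (hwhat : ∀ k ≥ 1, what k = ((K : ℝ)⁻¹) • ∑ i, x k i)
    (hwupd : ∀ k ≥ 1, w (k + 1) = what k + ((t k - 1) / t (k + 1)) • (what k - what (k - 1))) :
    ∀ k ≥ 1,
      2 * μ * (t k ^ 2 * ((K : ℝ) * ((∑ j, f j (what k)) - (∑ j, f j xstar)))
          - t (k + 1) ^ 2 * ((K : ℝ) * ((∑ j, f j (what (k + 1))) - (∑ j, f j xstar))))
        ≥ (K : ℝ) * ((K : ℝ) - 1) *
            (‖t (k + 1) • what (k + 1) - (t (k + 1) - 1) • what k - xstar‖ ^ 2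
              - ‖t k • what k - (t k - 1) • what (k - 1) - xstar‖ ^ 2) := by
  have hKR : (1:ℝ) ≤ (K:ℝ) := by exact_mod_cast hK
  have hKne : (K:ℝ) ≠ 0 := by positivity
  have hμne : μ ≠ 0 := ne_of_gt hμ0
  -- Lipschitz constants are bounded by 1/μ
  have hLle : ∀ j, L j ≤ 1 / μ := by
    intro j
    set S := Finset.univ.sup' (Finset.univ_nonempty_iff.mpr ⟨⟨0, hK⟩⟩) L with hS
    have hjS : L j ≤ S := Finset.le_sup' L (mem_univ j)
    have hSpos : 0 < S := by
      by_contra hcon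
      push_neg at hcon
      have h1 : (1:ℝ) / S ≤ 0 := by
        rcases lt_or_eq_of_le hcon with h' | h'
        · exact le_of_lt (div_neg_of_pos_of_neg one_pos h')
        · simp [h']
      linarith
    have h2 : μ * S ≤ 1 := (le_div_iff₀ hSpos).1 hμ
    have h3 : S ≤ 1 / μ := by
      rw [le_div_iff₀ hμ0]
      linarith [mul_comm μ S]
    linarith
  -- descent lemma with parameter 1/(2μ)
  have hdes : ∀ j (y z : EuclideanSpace ℝ (Fin n)),
      f j y ≤ f j z + ⟪g j z, y - z⟫ + 1 / (2 * μ) * ‖y - z‖ ^ 2 := by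
    intro j y z
    have h1 := descent_lem (f j) (g j) (L j) (hgrad j) (hlip j) y z
    have h3 : L j / 2 ≤ 1 / (2 * μ) := by
      rw [show (1:ℝ) / (2 * μ) = (1 / μ) / 2 by ring]
      linarith [hLle j]
    nlinarith [sq_nonneg ‖y - z‖, mul_le_mul_of_nonneg_right h3 (sq_nonneg ‖y - z‖)]
  -- the key one-step inequality
  have star : ∀ m : ℕ, 1 ≤ m → ∀ u : EuclideanSpace ℝ (Fin n),
      2 * μ * ((K:ℝ) * ((∑ j, f j (what m)) - (∑ j, f j u)))
        ≤ (K:ℝ) * ((K:ℝ) - 1) * (‖u - w m‖ ^ 2 - ‖what m - u‖ ^ 2) := by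
    intro m hm u
    set c : ℝ := ((K:ℝ) - 1) / (2 * μ) with hc
    have hc0 : 0 ≤ c := div_nonneg (by linarith) (by positivity)
    -- per-agent inequality
    have per : ∀ i, (∑ j, f j (x m i)) + c * ‖u - x m i‖ ^ 2
        ≤ (∑ j, f j u) + c * ‖u - w m‖ ^ 2 := by
      intro i
      set φ : EuclideanSpace ℝ (Fin n) → ℝ :=
        fun v => f i v + ∑ j ∈ Finset.univ.erase i, (f j (w m) + ⟪g j (w m), v - w m⟫) with hφ
      have hsum : ∀ z : EuclideanSpace ℝ (Fin n),
          (∑ j ∈ Finset.univ.erase i,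
            (f j (w m) + ⟪g j (w m), z - w m⟫ + 1 / (2 * μ) * ‖z - w m‖ ^ 2))
          = (∑ j ∈ Finset.univ.erase i, (f j (w m) + ⟪g j (w m), z - w m⟫))
            + c * ‖z - w m‖ ^ 2 := by
        intro z
        rw [Finset.sum_add_distrib, Finset.sum_const]
        congr 1
        rw [Finset.card_erase_of_mem (mem_univ i), Finset.card_univ, Fintype.card_fin,
          nsmul_eq_mul, Nat.cast_sub hK, hc]
        push_cast
        field_simp
      have hmin : ∀ v, φ (x m i) + c * ‖x m i - w m‖ ^ 2 ≤ φ v + c * ‖v - w m‖ ^ 2 := by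
        intro v
        have h0 := hx m hm i v
        rw [hsum (x m i), hsum v] at h0
        simp only [hφ]
        linarith
      have hsm : φ (x m i) + c * ‖x m i - w m‖ ^ 2 + c * ‖u - x m i‖ ^ 2
          ≤ φ u + c * ‖u - w m‖ ^ 2 := by
        have key : ∀ l : ℝ, l ∈ Set.Ioo (0:ℝ) 1 →
            φ (x m i) + c * ‖x m i - w m‖ ^ 2 + c * (1 - l) * ‖u - x m i‖ ^ 2
              ≤ φ u + c * ‖u - w m‖ ^ 2 := by
          intro l hl
          set mix := (1 - l) • x m i + l • u with hmixdef
          have hmw : mix - w m = (1 - l) • (x m i - w m) + l • (u - w m) := by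
            rw [hmixdef]; module
          have hφmix : φ mix ≤ (1 - l) * φ (x m i) + l * φ u := by
            have hfi : f i mix ≤ (1 - l) * f i (x m i) + l * f i u :=
              (hconv i).2 (Set.mem_univ _) (Set.mem_univ _) (by linarith [hl.2])
                (le_of_lt hl.1) (by ring)
            have hlin : ∀ j : Fin K, f j (w m) + ⟪g j (w m), mix - w m⟫
                = (1 - l) * (f j (w m) + ⟪g j (w m), x m i - w m⟫)
                  + l * (f j (w m) + ⟪g j (w m), u - w m⟫) := by
              intro j
              rw [hmw, inner_add_right, real_inner_smul_right, real_inner_smul_right]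
              ring
            simp only [hφ]
            have hsum2 : ∑ j ∈ Finset.univ.erase i, (f j (w m) + ⟪g j (w m), mix - w m⟫)
                = (1 - l) * (∑ j ∈ Finset.univ.erase i, (f j (w m) + ⟪g j (w m), x m i - w m⟫))
                  + l * (∑ j ∈ Finset.univ.erase i, (f j (w m) + ⟪g j (w m), u - w m⟫)) := by
              rw [Finset.mul_sum, Finset.mul_sum, ← Finset.sum_add_distrib]
              exact Finset.sum_congr rfl (fun j _ => hlin j)
            rw [hsum2]
            linarith [hfi]
          have hnorm : ‖mix - w m‖ ^ 2 = (1 - l) * ‖x m i - w m‖ ^ 2 + l * ‖u - w m‖ ^ 2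
              - l * (1 - l) * ‖u - x m i‖ ^ 2 := by
            rw [hmw, comb_sq]
            rw [show x m i - w m - (u - w m) = -(u - x m i) by abel, norm_neg]
          have hnorm' : c * ‖mix - w m‖ ^ 2 = c * ((1 - l) * ‖x m i - w m‖ ^ 2
              + l * ‖u - w m‖ ^ 2 - l * (1 - l) * ‖u - x m i‖ ^ 2) := by rw [hnorm]
          have h2 := hmin mix
          have h3 : l * (φ (x m i) + c * ‖x m i - w m‖ ^ 2 + c * (1 - l) * ‖u - x m i‖ ^ 2)
              ≤ l * (φ u + c * ‖u - w m‖ ^ 2) := by linarith [h2, hφmix, hnorm']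
          exact le_of_mul_le_mul_left h3 hl.1
        have hcont : Filter.Tendsto (fun l : ℝ => φ (x m i) + c * ‖x m i - w m‖ ^ 2
            + c * (1 - l) * ‖u - x m i‖ ^ 2) (nhdsWithin 0 (Set.Ioi 0))
            (nhds (φ (x m i) + c * ‖x m i - w m‖ ^ 2 + c * (1 - 0) * ‖u - x m i‖ ^ 2)) := by
          apply Filter.Tendsto.mono_left _ nhdsWithin_le_nhds
          apply Continuous.tendsto
          fun_prop
        have h4 := le_of_tendsto hcont (by
          filter_upwards [Ioo_mem_nhdsGT_of_mem (by norm_num : (0:ℝ) ∈ Set.Ico (0:ℝ) 1)]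
            with l hl using key l hl)
        simpa using h4
      -- F(x m i) ≤ φ(x m i) + c‖x m i − w m‖²
      have hFx : (∑ j, f j (x m i)) ≤ φ (x m i) + c * ‖x m i - w m‖ ^ 2 := by
        have hsplit := Finset.add_sum_erase Finset.univ (fun j => f j (x m i)) (mem_univ i)
        have hb : ∑ j ∈ Finset.univ.erase i, f j (x m i)
            ≤ ∑ j ∈ Finset.univ.erase i,
              (f j (w m) + ⟪g j (w m), x m i - w m⟫ + 1 / (2 * μ) * ‖x m i - w m‖ ^ 2) :=
          Finset.sum_le_sum (fun j _ => hdes j (x m i) (w m))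
        rw [hsum (x m i)] at hb
        simp only [hφ]
        rw [← hsplit]
        linarith
      have hφu : φ u ≤ ∑ j, f j u := by
        have hsplit := Finset.add_sum_erase Finset.univ (fun j => f j u) (mem_univ i)
        have hb : ∑ j ∈ Finset.univ.erase i, (f j (w m) + ⟪g j (w m), u - w m⟫)
            ≤ ∑ j ∈ Finset.univ.erase i, f j u :=
          Finset.sum_le_sum (fun j _ => grad_lower (f j) (hconv j) (hgrad j (w m)) u)
        simp only [hφ]
        rw [← hsplit]
        linarith
      linarith [hsm, hFx, hφu]
    -- ∑ x m i = K • what m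
    have hzero : (∑ i, x m i) - (K:ℝ) • what m = 0 := by
      rw [hwhat m hm, smul_smul, mul_inv_cancel₀ hKne, one_smul, sub_self]
    have hsumdiff : (∑ i, (x m i - what m)) = (∑ i, x m i) - (K:ℝ) • what m := by
      rw [Finset.sum_sub_distrib, Finset.sum_const, Finset.card_univ, Fintype.card_fin,
        ← Nat.cast_smul_eq_nsmul ℝ]
    -- Jensen
    have hjensen : (K:ℝ) * (∑ j, f j (what m)) ≤ ∑ i, ∑ j, f j (x m i) := by
      rw [Finset.sum_comm, Finset.mul_sum]
      apply Finset.sum_le_sum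
      intro j _
      have h8 := Finset.sum_le_sum
        (fun i (_ : i ∈ Finset.univ) => grad_lower (f j) (hconv j) (hgrad j (what m)) (x m i))
      have h9 : ∑ i : Fin K, (f j (what m) + ⟪g j (what m), x m i - what m⟫)
          = (K:ℝ) * f j (what m) + ⟪g j (what m), (∑ i, x m i) - (K:ℝ) • what m⟫ := by
        rw [Finset.sum_add_distrib, Finset.sum_const, Finset.card_univ, Fintype.card_fin,
          nsmul_eq_mul, ← hsumdiff, inner_sum]
      rw [h9, hzero, inner_zero_right, add_zero] at h8
      exact h8
    -- variance
    have hvar : (K:ℝ) * ‖what m - u‖ ^ 2 ≤ ∑ i, ‖u - x m i‖ ^ 2 := by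
      have h11 : ∀ i : Fin K, ‖u - x m i‖ ^ 2
          = ‖u - what m‖ ^ 2 + 2 * ⟪u - what m, what m - x m i⟫ + ‖what m - x m i‖ ^ 2 := by
        intro i
        rw [show u - x m i = (u - what m) + (what m - x m i) by abel, norm_add_sq_real]
      have h12 : ∑ i, ‖u - x m i‖ ^ 2
          = (K:ℝ) * ‖u - what m‖ ^ 2
            + 2 * ⟪u - what m, ∑ i, (what m - x m i)⟫ + ∑ i, ‖what m - x m i‖ ^ 2 := by
        rw [Finset.sum_congr rfl (fun i _ => h11 i), Finset.sum_add_distrib,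
          Finset.sum_add_distrib, Finset.sum_const, Finset.card_univ, Fintype.card_fin,
          nsmul_eq_mul, inner_sum, Finset.mul_sum]
      have h13 : ∑ i, (what m - x m i) = -((∑ i, x m i) - (K:ℝ) • what m) := by
        rw [Finset.sum_sub_distrib, Finset.sum_const, Finset.card_univ, Fintype.card_fin,
          ← Nat.cast_smul_eq_nsmul ℝ]
        abel
      rw [h13, hzero, neg_zero, inner_zero_right] at h12
      have h14 : (0:ℝ) ≤ ∑ i, ‖what m - x m i‖ ^ 2 :=
        Finset.sum_nonneg (fun i _ => sq_nonneg _)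
      rw [norm_sub_rev (what m) u]
      rw [h12]
      linarith
    -- sum the per-agent inequalities
    have hsumper := Finset.sum_le_sum (fun i (_ : i ∈ Finset.univ) => per i)
    rw [Finset.sum_add_distrib, Finset.sum_const, Finset.card_univ, Fintype.card_fin,
      nsmul_eq_mul, ← Finset.mul_sum] at hsumper
    have hvar' := mul_le_mul_of_nonneg_left hvar hc0
    have hgoal2 : (K:ℝ) * ((∑ j, f j (what m)) - (∑ j, f j u))
        ≤ c * ((K:ℝ) * (‖u - w m‖ ^ 2 - ‖what m - u‖ ^ 2)) := by
      linarith [hjensen, hsumper, hvar']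
    calc 2 * μ * ((K:ℝ) * ((∑ j, f j (what m)) - ∑ j, f j u))
        ≤ 2 * μ * (c * ((K:ℝ) * (‖u - w m‖ ^ 2 - ‖what m - u‖ ^ 2))) :=
          mul_le_mul_of_nonneg_left hgoal2 (by positivity)
      _ = (K:ℝ) * ((K:ℝ) - 1) * (‖u - w m‖ ^ 2 - ‖what m - u‖ ^ 2) := by
          rw [hc]; field_simp
  -- main recursion
  intro k hk
  have h2 := htrec k hk
  have h0 : (0:ℝ) ≤ 1 + 4 * t k ^ 2 := by positivity
  have hss : Real.sqrt (1 + 4 * t k ^ 2) ^ 2 = 1 + 4 * t k ^ 2 := Real.sq_sqrt h0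
  have hs1 : (1:ℝ) ≤ Real.sqrt (1 + 4 * t k ^ 2) := by
    have h5 := Real.sqrt_le_sqrt (show (1:ℝ) ≤ 1 + 4 * t k ^ 2 by nlinarith)
    rwa [Real.sqrt_one] at h5
  have hT1 : 1 ≤ t (k + 1) := by rw [h2]; linarith
  have hT0 : (0:ℝ) < t (k + 1) := lt_of_lt_of_le one_pos hT1
  have htsq : t (k + 1) ^ 2 = t (k + 1) + t k ^ 2 := by
    rw [h2]
    linear_combination hss / 4
  have hI := star (k + 1) (by omega) (what k)
  have hII := star (k + 1) (by omega) xstar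
  have hTc : t (k + 1) * ((t k - 1) / t (k + 1)) = t k - 1 := by
    field_simp
  have hid := key_id (what (k + 1)) (what k) (what (k - 1)) xstar
    (t (k + 1)) ((t k - 1) / t (k + 1))
  rw [hTc] at hid
  rw [show t k - 1 + 1 = t k by ring] at hid
  rw [← hwupd k hk] at hid
  -- multiply star inequalities
  have hnn1 : (0:ℝ) ≤ t (k + 1) * (t (k + 1) - 1) := by nlinarith
  have hI' := mul_le_mul_of_nonneg_left hI hnn1
  have hII' := mul_le_mul_of_nonneg_left hII (le_of_lt hT0)
  have hid' : (K:ℝ) * ((K:ℝ) - 1) *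
      (t (k + 1) * ((t (k + 1) - 1) *
          (‖what k - w (k + 1)‖ ^ 2 - ‖what (k + 1) - what k‖ ^ 2)
        + (‖xstar - w (k + 1)‖ ^ 2 - ‖what (k + 1) - xstar‖ ^ 2)))
      = (K:ℝ) * ((K:ℝ) - 1) *
        (‖t k • what k - (t k - 1) • what (k - 1) - xstar‖ ^ 2
          - ‖t (k + 1) • what (k + 1) - (t (k + 1) - 1) • what k - xstar‖ ^ 2) := by
    rw [hid]
  have hsq' : t k ^ 2 = t (k + 1) ^ 2 - t (k + 1) := by linarith
  rw [ge_iff_le, hsq']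
  linarith [hI', hII', hid']
end
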